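/- arXiv:1909.03257 — 3 statements merged into one kernel-verified Lean document; each statement's English description precedes it below -/
import Mathlib

section
/- Let s ≥ 2 and let (H_n)_{n≥1} be the intertwining sequence of s sequences (η^{(j)}_i)_{i≥0} ⊂ ℂ (j = 1,…,s) of pairwise distinct elements. Suppose binom(d+s,s) < N < binom(d+1+s,s) for some d ≥ 0, so that k(N) = (k_1,…,k_m,0,…,0) with 2 ≤ m ≤ s and k_m ≥ 1. Then for every z = (z_1,…,z_s) ∈ ℂ^s one has VDM(H_1,…,H_N,z) = ∏_{j=1}^{m−2} [∏_{i=0}^{k_j−1} (z_j − η^{(j)}_i)] × ∏_{i=0}^{k_{m−1}} (z_{m−1} − η^{(m−1)}_i) × ∏_{i=0}^{k_m−2} (z_s − η^{(s)}_i) × VDM(H_1,…,H_N). -/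
open Finset

/-- Graded lexicographic strict order on `ℕ^s`: first compare total degrees,
then compare lexicographically. -/
def GradedLexLt {s : ℕ} (k l : Fin s → ℕ) : Prop :=
  (∑ i, k i) < (∑ i, l i) ∨
    ((∑ i, k i) = (∑ i, l i) ∧ ∃ t : Fin s, (∀ u, u < t → k u = l u) ∧ k t < l t)

/-- Generalized Vandermonde determinant `det [e_i(G_j)]` where the monomials `e_i`
are given by the enumeration `kEnum` of `ℕ^s`. -/
noncomputable def VDM {s : ℕ} (kEnum : ℕ → Fin s → ℕ) {N : ℕ}
    (G : Fin N → Fin s → ℂ) : ℂ :=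
  Matrix.det (Matrix.of fun i j : Fin N => ∏ t, G j t ^ kEnum (i : ℕ) t)

/-!
Write `k = k(N) = (k_1,…,k_m,0,…,0)`. Its successor in the graded lexicographic order is
`r = k(N+1) = (k_1,…,k_{m-2}, k_{m-1}+1, 0,…,0, k_m-1)`: it has the same degree, and every `w`
with `k < w` of that degree is already `≥ r`. The polynomial
`P(w) = ∏_t ∏_{i < r_t} (w_t - η^{(t)}_i)` is `w^r` plus a combination of monomials `w^p` with
`p ≤ r` coordinatewise and `p ≠ r`; these have smaller degree, so they are among `e_1,…,e_N`.
Hence replacing the last row `e_{N+1}` of the Vandermonde matrix by the values of `P` does not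
change the determinant. Since `k(n) < r` in the graded order, some `k_t(n) < r_t`, so `P`
vanishes at every `H_n` with `n ≤ N`; expanding along the last row gives
`VDM(H_1,…,H_N,z) = P(z) · VDM(H_1,…,H_N)`, and `P(z)` splits into the claimed factors.
-/

namespace GradedLexLt

variable {s : ℕ} {k l : Fin s → ℕ}

theorem iff_toLex : GradedLexLt k l ↔
    (∑ i, k i) < (∑ i, l i) ∨ ((∑ i, k i) = (∑ i, l i) ∧ toLex k < toLex l) :=
  Iff.rfl

theorem irrefl (k : Fin s → ℕ) : ¬ GradedLexLt k k := by
  rw [iff_toLex]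
  exact fun h => h.elim (lt_irrefl _) fun h => lt_irrefl _ h.2

theorem asymm (h : GradedLexLt k l) : ¬ GradedLexLt l k := by
  rw [iff_toLex] at h ⊢
  rcases h with h | ⟨he, h⟩ <;> rintro (h' | ⟨h', h''⟩)
  · omega
  · omega
  · omega
  · exact lt_asymm h h''

theorem sum_le (h : GradedLexLt k l) : (∑ i, k i) ≤ (∑ i, l i) := by
  rcases h with h | ⟨h, -⟩ <;> omega

theorem exists_lt (h : GradedLexLt k l) : ∃ t, k t < l t := by
  by_contra! hle
  have hsum : ∑ t, l t = ∑ t, k t := le_antisymm (sum_le_sum fun t _ => hle t) h.sum_le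
  have hlk : l = k :=
    funext fun t => (sum_eq_sum_iff_of_le (fun t _ => hle t)).1 hsum t (mem_univ t)
  exact irrefl k (hlk ▸ h)

end GradedLexLt

section Enumeration

variable {s : ℕ} {kEnum : ℕ → Fin s → ℕ}

theorem lt_of_gradedLexLt_enum (hmono : ∀ a b : ℕ, a < b → GradedLexLt (kEnum a) (kEnum b))
    {a b : ℕ} (h : GradedLexLt (kEnum a) (kEnum b)) : a < b := by
  rcases lt_trichotomy a b with hab | rfl | hab
  · exact hab
  · exact absurd h (GradedLexLt.irrefl _)
  · exact absurd (hmono b a hab) h.asymm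

theorem exists_lt_enum_eq (hmono : ∀ a b : ℕ, a < b → GradedLexLt (kEnum a) (kEnum b))
    (hsurj : Function.Surjective kEnum) {p : Fin s → ℕ} {N : ℕ}
    (h : GradedLexLt p (kEnum N)) : ∃ n < N, kEnum n = p := by
  obtain ⟨n, rfl⟩ := hsurj p
  exact ⟨n, lt_of_gradedLexLt_enum hmono h, rfl⟩

theorem enum_succ_eq (hmono : ∀ a b : ℕ, a < b → GradedLexLt (kEnum a) (kEnum b))
    (hsurj : Function.Surjective kEnum) {n : ℕ} {r : Fin s → ℕ}
    (hlt : GradedLexLt (kEnum n) r) (hnext : ∀ w, GradedLexLt (kEnum n) w → ¬ GradedLexLt w r) :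
    kEnum (n + 1) = r := by
  obtain ⟨p, rfl⟩ := hsurj r
  have hnp : n < p := lt_of_gradedLexLt_enum hmono hlt
  rcases (Nat.succ_le_of_lt hnp).eq_or_lt with h | h
  · exact congrArg kEnum h
  · exact absurd (hmono _ _ h) (hnext _ (hmono _ _ n.lt_succ_self))

end Enumeration

theorem prod_filter_val_lt_eq_prod_castLE {M : Type*} [CommMonoid M] {b s : ℕ} (h : b ≤ s)
    (f : Fin s → M) :
    ∏ t ∈ univ.filter (fun t : Fin s => (t : ℕ) < b), f t = ∏ j : Fin b, f (Fin.castLE h j) := by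
  have himage : univ.filter (fun t : Fin s => (t : ℕ) < b) = univ.map (Fin.castLEEmb h) := by
    ext t
    simp only [mem_filter, mem_univ, true_and, mem_map, Fin.castLEEmb_apply]
    exact ⟨fun ht => ⟨⟨t, ht⟩, rfl⟩, fun ⟨j, hj⟩ => hj ▸ j.isLt⟩
  rw [himage, prod_map]
  rfl

/-- `(k_1,…,k_{m-2}, k_{m-1}+1, 0,…,0, c)`; for `c = k_m - 1` and `k = (k_1,…,k_m,0,…,0)` this is
the graded lexicographic successor of `k`. -/
def succExponent {s : ℕ} (k : Fin s → ℕ) (m c : ℕ) : Fin s → ℕ := fun j =>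
  if (j : ℕ) < m - 2 then k j
  else if (j : ℕ) = m - 2 then k j + 1
  else if (j : ℕ) = s - 1 then c
  else 0

section SuccExponent

variable {s m c : ℕ} {k : Fin s → ℕ}

theorem prod_succExponent {M : Type*} [CommMonoid M] (hm2 : 2 ≤ m) (hms : m ≤ s)
    (φ : Fin s → ℕ → M) (hφ : ∀ t, φ t 0 = 1) :
    ∏ t, φ t (succExponent k m c t) =
      (∏ j : Fin (m - 2), φ (Fin.castLE (by omega) j) (k (Fin.castLE (by omega) j))) *
        φ ⟨m - 2, by omega⟩ (k ⟨m - 2, by omega⟩ + 1) * φ ⟨s - 1, by omega⟩ c := by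
  have hpt : ∀ t, φ t (succExponent k m c t) =
      (if (t : ℕ) < m - 2 then φ t (k t) else 1) *
        (if t = ⟨m - 2, by omega⟩ then φ t (k t + 1) else 1) *
          (if t = ⟨s - 1, by omega⟩ then φ t c else 1) := by
    intro t
    simp only [succExponent, Fin.ext_iff]
    split_ifs <;> first | omega | simp [hφ]
  rw [prod_congr rfl fun t _ => hpt t, prod_mul_distrib, prod_mul_distrib, prod_ite_eq',
    prod_ite_eq', ← prod_filter, prod_filter_val_lt_eq_prod_castLE (by omega : m - 2 ≤ s)]
  simp

theorem sum_succExponent (hm2 : 2 ≤ m) (hms : m ≤ s) (hzero : ∀ j : Fin s, m ≤ (j : ℕ) → k j = 0)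
    (hc : k ⟨m - 1, by omega⟩ = c + 1) :
    ∑ t, succExponent k m c t = ∑ t, k t := by
  have hpt : ∀ t, succExponent k m c t + (if t = ⟨m - 1, by omega⟩ then c + 1 else 0) =
      k t + (if t = ⟨m - 2, by omega⟩ then 1 else 0) +
        (if t = ⟨s - 1, by omega⟩ then c else 0) := by
    intro t
    have := hzero t
    by_cases ht : t = ⟨m - 1, by omega⟩
    · subst ht
      simp only [succExponent, hc, Fin.ext_iff]
      split_ifs <;> omega
    · simp only [succExponent, Fin.ext_iff] at ht ⊢
      split_ifs <;> omega
  have hsum := congrArg (fun f : Fin s → ℕ => ∑ t, f t) (funext hpt)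
  simp only [sum_add_distrib, sum_ite_eq', mem_univ, if_true] at hsum
  omega

theorem gradedLexLt_succExponent (hm2 : 2 ≤ m) (hms : m ≤ s)
    (hzero : ∀ j : Fin s, m ≤ (j : ℕ) → k j = 0) (hc : k ⟨m - 1, by omega⟩ = c + 1) :
    GradedLexLt k (succExponent k m c) := by
  refine Or.inr ⟨(sum_succExponent hm2 hms hzero hc).symm, ⟨m - 2, by omega⟩, fun u hu => ?_, ?_⟩
  · have hu : (u : ℕ) < m - 2 := hu
    simp [succExponent, hu]
  · simp [succExponent]

/-- After position `m - 2` the exponent `succExponent k m c` is zero except in the last slot, so it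
is lexicographically minimal among the vectors of its degree sharing its first `m - 1` entries. -/
theorem sum_lt_sum_succExponent {w : Fin s → ℕ}
    (hagree : ∀ u : Fin s, (u : ℕ) ≤ m - 2 → w u = succExponent k m c u)
    (hlt : toLex w < toLex (succExponent k m c)) :
    ∑ u, w u < ∑ u, succExponent k m c u := by
  set r := succExponent k m c
  obtain ⟨t, hpre, ht⟩ := hlt
  simp only [Pi.toLex_apply] at hpre ht
  have hlast : (t : ℕ) = s - 1 := by
    by_contra hne
    have : m - 2 < (t : ℕ) := by
      by_contra hle
      exact absurd (hagree t (by omega)) ht.ne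
    have : r t = 0 := by
      simp only [r, succExponent]
      split_ifs <;> omega
    omega
  refine sum_lt_sum (fun u _ => ?_) ⟨t, mem_univ _, ht⟩
  rcases lt_or_ge u t with hu | hu
  · exact (hpre u hu).le
  · obtain rfl : u = t := Fin.ext (by have := u.isLt; have : (t : ℕ) ≤ u := hu; omega)
    exact ht.le

theorem not_gradedLexLt_succExponent (hm2 : 2 ≤ m) (hms : m ≤ s)
    (hzero : ∀ j : Fin s, m ≤ (j : ℕ) → k j = 0) (hc : k ⟨m - 1, by omega⟩ = c + 1)
    {w : Fin s → ℕ} (h₁ : GradedLexLt k w) : ¬ GradedLexLt w (succExponent k m c) := by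
  set r := succExponent k m c
  intro h₂
  have hsum : ∑ t, r t = ∑ t, k t := sum_succExponent hm2 hms hzero hc
  have hle₁ := h₁.sum_le
  have hle₂ := h₂.sum_le
  rcases h₁ with h₁ | ⟨-, t₁, hp₁, ht₁⟩
  · omega
  rcases h₂ with h₂ | ⟨-, h₂⟩
  · omega
  have hr : ∀ u : Fin s, (u : ℕ) < m - 2 → r u = k u := fun u hu => by
    simp [r, succExponent, hu]
  have hwr : ∀ u : Fin s, u < t₁ → (u : ℕ) < m - 2 → w u = r u := fun u hu hu' =>
    (hp₁ u hu).symm.trans (hr u hu').symm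
  have hlex : (t₁ : ℕ) ≤ m - 2 → w t₁ ≤ r t₁ := fun ht =>
    Pi.apply_le_of_toLex (le_of_lt (α := Lex (Fin s → ℕ)) h₂) fun u hu => hwr u hu (by
      have : (u : ℕ) < t₁ := hu
      omega)
  rcases lt_trichotomy (t₁ : ℕ) (m - 2) with hlt | heq | hgt
  · have := hlex hlt.le
    rw [hr t₁ hlt] at this
    omega
  · have hr₁ : r t₁ = k t₁ + 1 := by simp [r, succExponent, heq]
    have hwt₁ := hlex heq.le
    have hagree : ∀ u : Fin s, (u : ℕ) ≤ m - 2 → w u = r u := fun u hu => by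
      rcases hu.lt_or_eq with hu | hu
      · exact hwr u (by rw [Fin.lt_def]; omega) hu
      · obtain rfl : u = t₁ := Fin.ext (hu.trans heq.symm)
        omega
    have : ∑ u, w u < ∑ u, r u := sum_lt_sum_succExponent hagree h₂
    omega
  · have : ∑ u, k u < ∑ u, w u := by
      refine sum_lt_sum (fun u _ => ?_) ⟨t₁, mem_univ _, ht₁⟩
      rcases lt_trichotomy u t₁ with hu | rfl | hu
      · exact (hp₁ u hu).le
      · exact ht₁.le
      · have : t₁ < (u : ℕ) := hu
        rw [hzero u (by omega)]
        exact Nat.zero_le _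
    omega

end SuccExponent

theorem exists_prod_sub_eq_sum_pow {A : Type*} [CommRing A] (a : ℕ → A) (n : ℕ) :
    ∃ c : ℕ → A, c n = 1 ∧ ∀ x, ∏ i ∈ range n, (x - a i) = ∑ j ∈ range (n + 1), c j * x ^ j := by
  nontriviality A
  set p : Polynomial A := ∏ i ∈ range n, (Polynomial.X - Polynomial.C (a i))
  have hmonic : p.Monic := Polynomial.monic_prod_of_monic _ _ fun i _ => Polynomial.monic_X_sub_C _
  have hdeg : p.natDegree = n := by
    simp [p, Polynomial.natDegree_prod_of_monic _ _ fun i _ => Polynomial.monic_X_sub_C (a i)]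
  refine ⟨p.coeff, hdeg ▸ hmonic.coeff_natDegree, fun x => ?_⟩
  have heval := Polynomial.eval_eq_sum_range (p := p) x
  rw [hdeg] at heval
  simp [← heval, p, Polynomial.eval_prod]

theorem exists_prod_prod_sub_eq {A : Type*} [CommRing A] {s : ℕ} (r : Fin s → ℕ)
    (a : Fin s → ℕ → A) :
    ∃ q : (Fin s → ℕ) → A, ∀ w : Fin s → A,
      ∏ t, ∏ i ∈ range (r t), (w t - a t i) =
        ∏ t, w t ^ r t +
          ∑ p ∈ (Fintype.piFinset fun t => range (r t + 1)).erase r, q p * ∏ t, w t ^ p t := by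
  choose c hc₁ hc using fun t => exists_prod_sub_eq_sum_pow (a t) (r t)
  refine ⟨fun p => ∏ t, c t (p t), fun w => ?_⟩
  have hr : r ∈ Fintype.piFinset fun t => range (r t + 1) :=
    Fintype.mem_piFinset.2 fun t => self_mem_range_succ _
  rw [prod_congr rfl fun t _ => hc t (w t), prod_univ_sum, ← add_sum_erase _ _ hr]
  simp only [hc₁, one_mul, prod_mul_distrib]

theorem det_updateRow_add_mem_span {n A : Type*} [Fintype n] [DecidableEq n] [CommRing A]
    (M : Matrix n n A) (i : n) {u : n → A} (hu : u ∈ Submodule.span A (M '' {i}ᶜ)) :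
    (M.updateRow i (M i + u)).det = M.det := by
  suffices (M.updateRow i u).det = 0 by
    rw [Matrix.det_updateRow_add, Matrix.updateRow_eq_self, this, add_zero]
  induction hu using Submodule.span_induction with
  | mem v hv =>
    obtain ⟨j, hj, rfl⟩ := hv
    exact Matrix.det_updateRow_eq_zero hj
  | zero => exact Matrix.det_eq_zero_of_row_eq_zero i fun j => by simp
  | add v v' _ _ hv hv' => rw [Matrix.det_updateRow_add, hv, hv', add_zero]
  | smul x v _ hv => rw [Matrix.det_updateRow_smul, hv, mul_zero]

theorem det_updateRow_last_eq_mul {n : ℕ} {A : Type*} [CommRing A]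
    (M : Matrix (Fin (n + 1)) (Fin (n + 1)) A) {v : Fin (n + 1) → A}
    (hv : ∀ j : Fin n, v j.castSucc = 0) :
    (M.updateRow (Fin.last n) v).det =
      v (Fin.last n) * (M.submatrix Fin.castSucc Fin.castSucc).det := by
  have hsingle : v = v (Fin.last n) • Pi.single (Fin.last n) 1 := by
    ext j
    induction j using Fin.lastCases with
    | last => simp
    | cast j => simp [hv j, Fin.castSucc_ne_last]
  rw [hsingle, Matrix.det_updateRow_smul, ← Matrix.adjugate_apply,
    Matrix.adjugate_fin_succ_eq_det_submatrix, Fin.succAbove_last, ← two_mul, pow_mul]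
  simp

theorem VDM_snoc_eq_mul_of_vanishing {s N : ℕ} (kEnum : ℕ → Fin s → ℕ)
    (G : Fin N → Fin s → ℂ) (z : Fin s → ℂ) (f : (Fin s → ℂ) → ℂ)
    (T : Finset (Fin s → ℕ)) (q : (Fin s → ℕ) → ℂ) (hT : ∀ p ∈ T, ∃ n < N, kEnum n = p)
    (hf : ∀ w, f w = ∏ t, w t ^ kEnum N t + ∑ p ∈ T, q p * ∏ t, w t ^ p t)
    (hG : ∀ j, f (G j) = 0) :
    VDM kEnum (Fin.snoc G z) = f z * VDM kEnum G := by
  set G' : Fin (N + 1) → Fin s → ℂ := Fin.snoc G z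
  set M : Matrix (Fin (N + 1)) (Fin (N + 1)) ℂ := Matrix.of fun i j => ∏ t, G' j t ^ kEnum i t
  set v : Fin (N + 1) → ℂ := fun j => f (G' j)
  have hspan : v - M (Fin.last N) ∈ Submodule.span ℂ (M '' {Fin.last N}ᶜ) := by
    have hv : v - M (Fin.last N) =
        ∑ p ∈ T, q p • fun j => ∏ t, G' j t ^ p t := by
      ext j
      simp [v, M, hf]
    rw [hv]
    refine Submodule.sum_mem _ fun p hp => Submodule.smul_mem _ _ (Submodule.subset_span ?_)
    obtain ⟨n, hn, rfl⟩ := hT p hp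
    exact ⟨⟨n, by omega⟩, Fin.ne_of_lt (Fin.mk_lt_mk.2 hn), rfl⟩
  have hdet := det_updateRow_add_mem_span M (Fin.last N) hspan
  rw [add_sub_cancel, det_updateRow_last_eq_mul M fun j => by simp [v, G', hG]] at hdet
  rw [VDM, ← hdet]
  simp only [v, G', Fin.snoc_last]
  congr 2
  ext i j
  simp [M, G']

/-- Here `kEnum n` stands for the paper's `k(n+1)`, `H n` for `H_{n+1}`, and the paper's
(1-indexed) coordinate `k_j` is `kEnum (N-1) ⟨j-1⟩`. -/
theorem statement1 {s : ℕ} (hs : 2 ≤ s)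
    (kEnum : ℕ → Fin s → ℕ) (hbij : Function.Bijective kEnum)
    (hmono : ∀ a b : ℕ, a < b → GradedLexLt (kEnum a) (kEnum b))
    (η : Fin s → ℕ → ℂ)
    (H : ℕ → Fin s → ℂ) (hH : ∀ n j, H n j = η j (kEnum n j))
    (d N : ℕ)
    (hlow : Nat.choose (d + s) s < N)
    (m : ℕ) (hm2 : 2 ≤ m) (hms : m ≤ s)
    (hzero : ∀ j : Fin s, m ≤ (j : ℕ) → kEnum (N - 1) j = 0)
    (hkm : 1 ≤ kEnum (N - 1) ⟨m - 1, by omega⟩) :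
    ∀ z : Fin s → ℂ,
      VDM kEnum (Fin.snoc (fun i : Fin N => H i) z) =
        (∏ j : Fin (m - 2),
            ∏ i ∈ range (kEnum (N - 1) (Fin.castLE (show m - 2 ≤ s by omega) j)),
              (z (Fin.castLE (show m - 2 ≤ s by omega) j)
                - η (Fin.castLE (show m - 2 ≤ s by omega) j) i)) *
        (∏ i ∈ range (kEnum (N - 1) ⟨m - 2, by omega⟩ + 1),
            (z ⟨m - 2, by omega⟩ - η ⟨m - 2, by omega⟩ i)) *
        (∏ i ∈ range (kEnum (N - 1) ⟨m - 1, by omega⟩ - 1),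
            (z ⟨s - 1, by omega⟩ - η ⟨s - 1, by omega⟩ i)) *
          VDM kEnum (fun i : Fin N => H i) := by
  intro z
  have hN : 0 < N := (Nat.choose_pos (by omega)).trans hlow
  set k := kEnum (N - 1)
  have hc : k ⟨m - 1, by omega⟩ = k ⟨m - 1, by omega⟩ - 1 + 1 := by omega
  set r := succExponent k m (k ⟨m - 1, by omega⟩ - 1)
  have hr : kEnum N = r := by
    have := enum_succ_eq hmono hbij.2 (gradedLexLt_succExponent hm2 hms hzero hc)
      fun w hw => not_gradedLexLt_succExponent hm2 hms hzero hc hw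
    rwa [Nat.sub_add_cancel hN] at this
  have hvanish : ∀ n : Fin N, ∏ t, ∏ i ∈ range (r t), (H n t - η t i) = 0 := by
    intro n
    obtain ⟨t, ht⟩ := (hr ▸ hmono n N n.isLt).exists_lt
    exact prod_eq_zero (mem_univ t) (prod_eq_zero (mem_range.2 ht) (by rw [hH, sub_self]))
  have hbelow : ∀ p ∈ (Fintype.piFinset fun t => range (r t + 1)).erase r,
      ∃ n < N, kEnum n = p := by
    intro p hp
    obtain ⟨hne, hp⟩ := mem_erase.1 hp
    have hle : p ≤ r := fun t => Nat.lt_succ_iff.1 (mem_range.1 (Fintype.mem_piFinset.1 hp t))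
    exact exists_lt_enum_eq hmono hbij.2 (hr ▸ Or.inl (Fintype.sum_strictMono (hle.lt_of_ne hne)))
  obtain ⟨q, hq⟩ := exists_prod_prod_sub_eq r η
  rw [VDM_snoc_eq_mul_of_vanishing kEnum (fun n : Fin N => H n) z
      (fun w => ∏ t, ∏ i ∈ range (r t), (w t - η t i)) _ q hbelow (fun w => hr ▸ hq w) hvanish]
  congr 1
  exact prod_succExponent hm2 hms (fun t n => ∏ i ∈ range n, (z t - η t i))
    fun t => prod_range_zero _
end

section
/- Let (η_i)_{i≥0} be the explicit Leja sequence for the closed unit disk given by η_k = exp(iπ Σ_{l=0}^{s'} j_l 2^{−l}) where k = Σ_{l=0}^{s'} j_l 2^{l} with binary digits j_l ∈ {0,1} (so η_0 = 1). For j = 1,…,s let (η^{(j)}_i)_{i≥0} be this sequence. Then the intertwining sequence of (η^{(1)}_i)_{i≥0},…,(η^{(s)}_i)_{i≥0} is a Leja sequence for the closed unit polydisc D̄^s ⊂ ℂ^s. -/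
open Finset

/-- A (multidimensional) Leja sequence for a compact set `K ⊂ ℂ^s`. -/
def IsLejaSeqMulti {s : ℕ} (kEnum : ℕ → Fin s → ℕ) (K : Set (Fin s → ℂ))
    (G : ℕ → Fin s → ℂ) : Prop :=
  (∀ n, G n ∈ K) ∧ G 0 ∈ frontier K ∧
    ∀ N : ℕ, 1 ≤ N →
      IsGreatest
        ((fun z => ‖VDM kEnum (Fin.snoc (fun i : Fin N => G i) z)‖) '' K)
        ‖VDM kEnum (Fin.snoc (fun i : Fin N => G i) (G N))‖

/-- The explicit Leja sequence for the closed unit disk: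
`η_k = exp(iπ ∑_l j_l 2^{−l})` where `k = ∑_l j_l 2^l` in binary
(note every binary digit position `l` of `k` satisfies `l ≤ k`). -/
noncomputable def lejaDiskPoint (k : ℕ) : ℂ :=
  Complex.exp ((Real.pi : ℂ) * Complex.I *
    ∑ l ∈ range (k + 1), if Nat.testBit k l then ((2 : ℂ) ^ l)⁻¹ else 0)

/-!
The points `η (2m)` and `η (2m+1)` of the disk sequence are the two square roots of `η m`, so
`∏_{l<2n} (w - η l) = ∏_{l<n} (w² - η l)`. Halving `m` therefore gives the univariate Leja
inequality `∏_{l<m} |w - η l| ≤ ∏_{l<m} |η m - η l|` on the closed disk by induction.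

In several variables, let `Q z = ∏_t ∏_{l < k_N(t)} (z_t - η l)`. Every monomial of `Q` is
componentwise below `k_N`, hence among `e_0, …, e_N` in the graded order, and `e_N` has coefficient
one; and `Q` vanishes at each earlier point `H_i`, `i < N`, because `k_i` lags behind `k_N` in
some coordinate. Replacing the last row of the Vandermonde matrix by the corresponding combination
of rows leaves the row `(0, …, 0, Q z)`, so `VDM(H_0, …, H_{N-1}, z) = VDM(H_0, …, H_{N-1}) · Q z`
and the multivariate extremality reduces to the univariate one in each coordinate.
-/

open Polynomial

structure IsDyadicSqrtSeq (η : ℕ → ℂ) : Prop where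
  zero : η 0 = 1
  two_mul_sq : ∀ m, η (2 * m) ^ 2 = η m
  two_mul_add_one : ∀ m, η (2 * m + 1) = -η (2 * m)

structure IsLejaSeq (K : Set ℂ) (η : ℕ → ℂ) : Prop where
  mem : ∀ m, η m ∈ K
  norm_prod_sub_le : ∀ m, ∀ w ∈ K,
    ‖∏ l ∈ range m, (w - η l)‖ ≤ ‖∏ l ∈ range m, (η m - η l)‖

namespace IsDyadicSqrtSeq

variable {η : ℕ → ℂ}

theorem norm_eq_one (hη : IsDyadicSqrtSeq η) (k : ℕ) : ‖η k‖ = 1 := by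
  have h_even : ∀ n, ‖η n‖ = 1 → ‖η (2 * n)‖ = 1 := fun n hn =>
    (pow_eq_one_iff_of_nonneg (norm_nonneg _) two_ne_zero).1 (by rw [← norm_pow, hη.two_mul_sq, hn])
  induction k using Nat.evenOddRec with
  | h0 => simp [hη.zero]
  | h_even n ih => exact h_even n ih
  | h_odd n ih => rw [hη.two_mul_add_one, norm_neg, h_even n ih]

theorem prod_range_two_mul (hη : IsDyadicSqrtSeq η) (n : ℕ) (w : ℂ) :
    ∏ l ∈ range (2 * n), (w - η l) = ∏ l ∈ range n, (w ^ 2 - η l) := by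
  induction n with
  | zero => simp
  | succ n ih =>
    rw [show 2 * (n + 1) = 2 * n + 1 + 1 by ring, prod_range_succ, prod_range_succ,
      prod_range_succ, ih, mul_assoc, hη.two_mul_add_one, ← hη.two_mul_sq n]
    ring

theorem isLejaSeq (hη : IsDyadicSqrtSeq η) : IsLejaSeq (Metric.closedBall 0 1) η := by
  have hsq : ∀ w : ℂ, ‖w‖ ≤ 1 → ‖w ^ 2‖ ≤ 1 := fun w hw => by
    rw [norm_pow]; exact pow_le_one₀ (norm_nonneg w) hw
  refine ⟨fun m => by simp [hη.norm_eq_one], fun m => ?_⟩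
  simp only [mem_closedBall_zero_iff]
  induction m using Nat.evenOddRec with
  | h0 => simp
  | h_even n ih =>
    intro w hw
    rw [hη.prod_range_two_mul, hη.prod_range_two_mul, hη.two_mul_sq]
    exact ih _ (hsq w hw)
  | h_odd n ih =>
    intro w hw
    have hgap : ‖η (2 * n + 1) - η (2 * n)‖ = 2 := by
      rw [hη.two_mul_add_one, ← neg_add', norm_neg, ← two_mul, norm_mul, hη.norm_eq_one]
      norm_num
    calc ‖∏ l ∈ range (2 * n + 1), (w - η l)‖
        = ‖∏ l ∈ range n, (w ^ 2 - η l)‖ * ‖w - η (2 * n)‖ := by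
          rw [prod_range_succ, hη.prod_range_two_mul, norm_mul]
      _ ≤ ‖∏ l ∈ range n, (η n - η l)‖ * 2 := by
          gcongr
          · exact ih _ (hsq w hw)
          · linarith [norm_sub_le w (η (2 * n)), hη.norm_eq_one (2 * n)]
      _ = ‖∏ l ∈ range (2 * n + 1), (η (2 * n + 1) - η l)‖ := by
          rw [prod_range_succ, hη.prod_range_two_mul, norm_mul, hgap, hη.two_mul_add_one,
            neg_sq, hη.two_mul_sq]

end IsDyadicSqrtSeq

noncomputable def dyadicAngle (k : ℕ) : ℂ :=
  ∑ l ∈ range (k + 1), if k.testBit l then ((2 : ℂ) ^ l)⁻¹ else 0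

theorem dyadicAngle_eq_sum_range {k M : ℕ} (hk : k < M) :
    dyadicAngle k = ∑ l ∈ range M, if k.testBit l then ((2 : ℂ) ^ l)⁻¹ else 0 := by
  refine sum_subset (range_subset_range.2 hk) fun l _ hl => if_neg ?_
  simp only [mem_range, not_lt] at hl
  exact Bool.eq_false_iff.1 <| Nat.testBit_eq_false_of_lt <|
    Nat.lt_two_pow_self.trans_le (Nat.pow_le_pow_right two_pos (by omega))

theorem dyadicAngle_bit (b : Bool) (m : ℕ) :
    dyadicAngle (Nat.bit b m) = b.toNat + dyadicAngle m / 2 := by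
  have hb : Nat.bit b m < 2 * m + 1 + 1 := by cases b <;> simp [Nat.bit_val]
  rw [dyadicAngle_eq_sum_range hb, dyadicAngle_eq_sum_range (M := 2 * m + 1) (by omega),
    sum_range_succ', sum_div, add_comm]
  congr 1
  · cases b <;> simp
  · refine sum_congr rfl fun l _ => ?_
    rw [Nat.testBit_bit_succ]
    split_ifs <;> ring

theorem isDyadicSqrtSeq_lejaDiskPoint : IsDyadicSqrtSeq lejaDiskPoint := by
  have hpt : ∀ b m, lejaDiskPoint (Nat.bit b m) =
      Complex.exp (Real.pi * Complex.I * (b.toNat + dyadicAngle m / 2)) := fun b m => by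
    rw [← dyadicAngle_bit]; rfl
  refine ⟨by simp [lejaDiskPoint], fun m => ?_, fun m => ?_⟩
  · rw [← Nat.bit_false_apply, hpt, ← Complex.exp_nat_mul]
    change _ = Complex.exp (Real.pi * Complex.I * dyadicAngle m)
    congr 1
    push_cast [Bool.toNat_false]
    ring
  · rw [← Nat.bit_true_apply, ← Nat.bit_false_apply, hpt, hpt]
    simp [mul_add, Complex.exp_add]

open scoped Matrix

theorem Matrix.det_eq_vecMul_last_mul_det_submatrix {R : Type*} [CommRing R] {N : ℕ}
    (A : Matrix (Fin (N + 1)) (Fin (N + 1)) R) {c : Fin (N + 1) → R}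
    (hc : c (Fin.last N) = 1) (hzero : ∀ j : Fin N, (c ᵥ* A) j.castSucc = 0) :
    A.det = (c ᵥ* A) (Fin.last N) * (A.submatrix Fin.castSucc Fin.castSucc).det := by
  have hrow := A.det_updateRow_sum (Fin.last N) c
  rw [hc, one_smul, ← vecMul_eq_sum] at hrow
  have hsub : (A.updateRow (Fin.last N) (c ᵥ* A)).submatrix Fin.castSucc Fin.castSucc =
      A.submatrix Fin.castSucc Fin.castSucc := by
    ext i j
    simp [updateRow_apply, (Fin.castSucc_lt_last i).ne]
  rw [← hrow, det_succ_row _ (Fin.last N), Fin.sum_univ_castSucc]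
  simp [hzero, hsub]

section Intertwining

variable {s : ℕ} {e : ℕ → Fin s → ℕ}

def intertwine (e : ℕ → Fin s → ℕ) (η : Fin s → ℕ → ℂ) (n : ℕ) : Fin s → ℂ :=
  fun t => η t (e n t)

theorem prod_eval_eq_sum_coeff_mul_pow {R : Type*} [CommRing R] (he : Function.Bijective e)
    (hreflect : ∀ a b, e a ≤ e b → a ≤ b) {N : ℕ} {p : Fin s → R[X]}
    (hp : ∀ t, (p t).natDegree ≤ e N t) (w : Fin s → R) :
    ∏ t, (p t).eval (w t) = ∑ i : Fin (N + 1), ∏ t, (p t).coeff (e i t) * w t ^ e i t := by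
  set f : (Fin s → ℕ) → R := fun d => ∏ t, (p t).coeff (d t) * w t ^ d t
  have hsub : Fintype.piFinset (fun t => range (e N t + 1)) ⊆ (range (N + 1)).image e := by
    intro d hd
    obtain ⟨a, rfl⟩ := he.2 d
    have hle : e a ≤ e N := fun t => Nat.lt_succ_iff.1 (mem_range.1 (Fintype.mem_piFinset.1 hd t))
    exact mem_image_of_mem e (mem_range.2 (Nat.lt_succ_of_le (hreflect a N hle)))
  have hvanish : ∀ d ∈ (range (N + 1)).image e,
      d ∉ Fintype.piFinset (fun t => range (e N t + 1)) → f d = 0 := by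
    intro d _ hd
    simp only [Fintype.mem_piFinset, mem_range, not_forall, not_lt, Nat.succ_le_iff] at hd
    obtain ⟨t, ht⟩ := hd
    have hdeg : (p t).natDegree < d t := (hp t).trans_lt ht
    exact prod_eq_zero (mem_univ t) (by rw [coeff_eq_zero_of_natDegree_lt hdeg, zero_mul])
  calc ∏ t, (p t).eval (w t)
      = ∏ t, ∑ d ∈ range (e N t + 1), (p t).coeff d * w t ^ d :=
        prod_congr rfl fun t _ => eval_eq_sum_range' (Nat.lt_succ_of_le (hp t)) _
    _ = ∑ d ∈ Fintype.piFinset (fun t => range (e N t + 1)), f d := prod_univ_sum _ _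
    _ = ∑ d ∈ (range (N + 1)).image e, f d := sum_subset hsub hvanish
    _ = ∑ i ∈ range (N + 1), f (e i) := sum_image fun a _ b _ h => he.1 h
    _ = ∑ i : Fin (N + 1), f (e i) := (Fin.sum_univ_eq_sum_range _ _).symm

theorem vdm_snoc_intertwine (he : Function.Bijective e) (hreflect : ∀ a b, e a ≤ e b → a ≤ b)
    (η : Fin s → ℕ → ℂ) (N : ℕ) (z : Fin s → ℂ) :
    VDM e (Fin.snoc (fun i : Fin N => intertwine e η i) z) =
      VDM e (fun i : Fin N => intertwine e η i) * ∏ t, ∏ l ∈ range (e N t), (z t - η t l) := by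
  set p : Fin s → ℂ[X] := fun t => Lagrange.nodal (range (e N t)) (η t)
  have hdeg : ∀ t, (p t).natDegree = e N t := by simp [p, Lagrange.natDegree_nodal]
  set c : Fin (N + 1) → ℂ := fun i => ∏ t, (p t).coeff (e i t)
  have hc : c (Fin.last N) = 1 :=
    prod_eq_one fun t _ => hdeg t ▸ Lagrange.nodal_monic.coeff_natDegree
  set G : Fin (N + 1) → Fin s → ℂ := Fin.snoc (fun i : Fin N => intertwine e η i) z
  have hvec : ∀ j, (c ᵥ* Matrix.of fun i j : Fin (N + 1) => ∏ t, G j t ^ e i t) j =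
      ∏ t, (p t).eval (G j t) := by
    intro j
    rw [prod_eval_eq_sum_coeff_mul_pow he hreflect (fun t => (hdeg t).le)]
    simp only [Matrix.vecMul, dotProduct, Matrix.of_apply, c, prod_mul_distrib]
  have hzero : ∀ j : Fin N, ∏ t, (p t).eval (G j.castSucc t) = 0 := by
    intro j
    obtain ⟨t, ht⟩ : ∃ t, e j t < e N t := by
      simpa [Pi.le_def] using mt (hreflect N j) (by omega)
    refine prod_eq_zero (mem_univ t) ?_
    simpa [G, intertwine] using Lagrange.eval_nodal_at_node (v := η t) (mem_range.2 ht)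
  rw [VDM, Matrix.det_eq_vecMul_last_mul_det_submatrix _ hc (fun j => (hvec _).trans (hzero j)),
    hvec, mul_comm]
  congr 1
  · rw [VDM]
    congr 1
    ext i j
    simp [G]
  · simp [p, G, Lagrange.eval_nodal]

theorem isGreatest_norm_vdm_snoc_intertwine {K : Fin s → Set ℂ} {η : Fin s → ℕ → ℂ}
    (hη : ∀ t, IsLejaSeq (K t) (η t)) (he : Function.Bijective e)
    (hreflect : ∀ a b, e a ≤ e b → a ≤ b) (N : ℕ) :
    IsGreatest
      ((fun z => ‖VDM e (Fin.snoc (fun i : Fin N => intertwine e η i) z)‖) '' Set.univ.pi K)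
      ‖VDM e (Fin.snoc (fun i : Fin N => intertwine e η i) (intertwine e η N))‖ := by
  refine ⟨⟨_, fun t _ => (hη t).mem _, rfl⟩, ?_⟩
  rintro _ ⟨z, hz, rfl⟩
  simp only [vdm_snoc_intertwine he hreflect, norm_mul, norm_prod (s := univ)]
  gcongr with t
  exact (hη t).norm_prod_sub_le _ _ (hz t (Set.mem_univ t))

end Intertwining

theorem GradedLexLt.not_le {s : ℕ} {k l : Fin s → ℕ} (h : GradedLexLt k l) : ¬l ≤ k := by
  intro hle
  rcases h with hsum | ⟨-, t, -, ht⟩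
  · exact (sum_le_sum fun i _ => hle i).not_gt hsum
  · exact (hle t).not_gt ht

/-- the intertwining sequence of `s` copies of the explicit Leja sequence
for the closed unit disk is a Leja sequence for the closed unit polydisc `D̄^s`. -/
theorem statement5 {s : ℕ} (hs : 2 ≤ s)
    (kEnum : ℕ → Fin s → ℕ) (hbij : Function.Bijective kEnum)
    (hmono : ∀ a b : ℕ, a < b → GradedLexLt (kEnum a) (kEnum b))
    (H : ℕ → Fin s → ℂ) (hH : ∀ n j, H n j = lejaDiskPoint (kEnum n j)) :
    IsLejaSeqMulti kEnum {z : Fin s → ℂ | ∀ j, ‖z j‖ ≤ 1} H := by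
  have hreflect : ∀ a b, kEnum a ≤ kEnum b → a ≤ b :=
    fun a b h => not_lt.1 fun hba => (hmono b a hba).not_le h
  obtain rfl : H = intertwine kEnum fun _ => lejaDiskPoint := funext fun n => funext (hH n)
  have hη := isDyadicSqrtSeq_lejaDiskPoint
  have hK : {z : Fin s → ℂ | ∀ j, ‖z j‖ ≤ 1} = Set.univ.pi fun _ => Metric.closedBall 0 1 := by
    ext; simp
  have hball : {z : Fin s → ℂ | ∀ j, ‖z j‖ ≤ 1} = Metric.closedBall 0 1 := by
    ext; simp [pi_norm_le_iff_of_nonneg]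
  have : Nonempty (Fin s) := ⟨⟨0, by omega⟩⟩
  refine ⟨fun n t => (hη.norm_eq_one _).le, ?_, fun N _ => ?_⟩
  · rw [hball, frontier_closedBall', mem_sphere_zero_iff_norm]
    refine le_antisymm ((pi_norm_le_iff_of_nonneg zero_le_one).2 fun t => (hη.norm_eq_one _).le) ?_
    exact (hη.norm_eq_one _).symm.le.trans
      (norm_le_pi_norm (intertwine kEnum (fun _ => lejaDiskPoint) 0) (Classical.arbitrary (Fin s)))
  · rw [hK]
    exact isGreatest_norm_vdm_snoc_intertwine (fun _ => hη.isLejaSeq) hbij hreflect N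
end

section
/- Let (η_i)_{i≥0} and (θ_j)_{j≥0} be sequences of pairwise distinct complex numbers, N ≥ 1 with associated integers d, m, and Ω_N, 𝒫_N as in the bidimensional intertwining setting. If (η_p,θ_q) ∈ Ω_N with p+q = d−1 and 0 ≤ p ≤ m−1, then for all (z,w) ∈ ℂ²: l^{(N)}_{(η_p,θ_q)}(z,w) = ∏_{i=0, i≠p}^{p+1} (z−η_i)/(η_p−η_i) · ∏_{j=0}^{q−1} (w−θ_j)/(θ_q−θ_j) − ∏_{i=0}^{p−1} (z−η_i)/(η_p−η_i) · ∏_{j=0}^{q−1} (w−θ_j)/(θ_q−θ_j) + ∏_{i=0}^{p−1} (z−η_i)/(η_p−η_i) · ∏_{j=0, j≠q}^{q+1} (w−θ_j)/(θ_q−θ_j). -/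
open Finset

/-- The index set of both `Ω_N` and the monomials spanning `𝒫_N` in the bidimensional
intertwining setting with parameters `d`, `m`: pairs `(k,l)` with `k+l < d`, or
`k+l = d` and `k ≤ m`. -/
def BidIdx (d m : ℕ) (p : ℕ × ℕ) : Prop :=
  p.1 + p.2 < d ∨ (p.1 + p.2 = d ∧ p.1 ≤ m)

/-- The polynomial space `𝒫_N` (as a space of functions on `ℂ²`): the span of the
monomials `z^k w^l` with `(k,l)` in the index set. -/
noncomputable def PolySpace (d m : ℕ) : Submodule ℂ ((ℂ × ℂ) → ℂ) :=
  Submodule.span ℂ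
    {f | ∃ k l : ℕ, BidIdx d m (k, l) ∧ f = fun p : ℂ × ℂ => p.1 ^ k * p.2 ^ l}

/-- `L` is the fundamental Lagrange interpolation polynomial (FLIP) of the point
`(η_p, θ_q)` of `Ω_N`: it belongs to `𝒫_N`, equals `1` at `(η_p, θ_q)` and `0` at
every other point of `Ω_N`. -/
def IsFLIP (η θ : ℕ → ℂ) (d m : ℕ) (p q : ℕ) (L : (ℂ × ℂ) → ℂ) : Prop :=
  L ∈ PolySpace d m ∧ L (η p, θ q) = 1 ∧
    ∀ k l : ℕ, BidIdx d m (k, l) → (k, l) ≠ (p, q) → L (η k, θ l) = 0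

/-!
The three-term function lies in `𝒫_N` and has the Lagrange values on `Ω_N`: each term is a
product of univariate factors vanishing on whole rows or columns of the grid, and at the only
two other nodes where a term survives, `(η_{p+1}, θ_q)` and `(η_p, θ_{q+1})`, two of the terms
cancel. It therefore suffices that interpolation on `Ω_N` is unisolvent. The index set of `Ω_N`
is a lower set of `ℕ²`, and on any lower set `S` a bivariate polynomial supported on `S` that
vanishes at the nodes `(η_k, θ_l)`, `(k, l) ∈ S`, is zero: its restriction to `w = θ_0` has
degree below the length of the bottom row of `S` and vanishes there, so it is divisible by
`w - θ_0`, and the quotient is supported on the lower set `S` shifted down by one row and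
vanishes on the correspondingly shifted grid.
-/

open Polynomial
open scoped Polynomial.Bivariate

section Unisolvence

variable {R : Type*} [CommRing R] {S : Set (ℕ × ℕ)}

-- In `F : R[X][Y]` the coefficient of `X ^ k * Y ^ l` is `(F.coeff l).coeff k`.
lemma exists_coeff_ne_zero_of_coeff_eval_C_ne_zero {F : R[X][Y]} {y : R} {k : ℕ}
    (h : (F.eval (C y)).coeff k ≠ 0) : ∃ l, (F.coeff l).coeff k ≠ 0 := by
  by_contra! h0
  apply h
  rw [eval_eq_sum_range, finsetSum_coeff]
  exact sum_eq_zero fun l _ => by rw [← C_pow, coeff_mul_C, h0, zero_mul]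

lemma coeff_coeff_divByMonic_X_sub_C_eq_zero (hS : IsLowerSet S) {F : R[X][Y]}
    (hF : ∀ k l, (k, l) ∉ S → (F.coeff l).coeff k = 0) (y : R) {k l : ℕ}
    (hkl : (k, l + 1) ∉ S) : ((F /ₘ (X - C (C y))).coeff l).coeff k = 0 := by
  rw [coeff_divByMonic_X_sub_C, finsetSum_coeff]
  refine sum_eq_zero fun i hi => ?_
  have hki : (k, i) ∉ S := fun h =>
    hkl (hS (show (k, l + 1) ≤ (k, i) from ⟨le_rfl, (mem_Icc.1 hi).1⟩) h)
  rw [← C_pow, coeff_C_mul, hF k i hki, mul_zero]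

lemma eval_C_eq_zero_of_isLowerSet [IsDomain R] (hS : IsLowerSet S) {η : ℕ → R}
    (hη : Function.Injective η) {F : R[X][Y]} (hF : ∀ k l, (k, l) ∉ S → (F.coeff l).coeff k = 0)
    {y : R} (hvan : ∀ k, (k, 0) ∈ S → F.evalEval (η k) y = 0) : F.eval (C y) = 0 := by
  by_contra hP
  obtain ⟨l, hl⟩ := exists_coeff_ne_zero_of_coeff_eval_C_ne_zero (leadingCoeff_ne_zero.2 hP)
  have hcorner : ((F.eval (C y)).natDegree, 0) ∈ S :=
    hS (show (_, 0) ≤ (_, l) from ⟨le_rfl, Nat.zero_le l⟩) (not_imp_comm.1 (hF _ _) hl)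
  exact hP <| eq_zero_of_natDegree_lt_card_of_eval_eq_zero _ (hη.comp Fin.val_injective)
    (fun k => hvan k (hS ⟨Nat.le_of_lt_succ k.2, le_rfl⟩ hcorner)) (by simp)

theorem eq_zero_of_evalEval_eq_zero_of_isLowerSet [IsDomain R] (hS : IsLowerSet S)
    {η θ : ℕ → R} (hη : Function.Injective η) (hθ : Function.Injective θ) {F : R[X][Y]}
    (hF : ∀ k l, (k, l) ∉ S → (F.coeff l).coeff k = 0)
    (hvan : ∀ k l, (k, l) ∈ S → F.evalEval (η k) (θ l) = 0) : F = 0 := by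
  induction hn : F.natDegree using Nat.strong_induction_on generalizing F S θ with
  | _ n ih =>
  set G := F /ₘ (X - C (C (θ 0)))
  have hFG : (X - C (C (θ 0))) * G = F := mul_divByMonic_eq_iff_isRoot.2 <|
    eval_C_eq_zero_of_isLowerSet hS hη hF fun k hk => hvan k 0 hk
  suffices hG : G = 0 by rw [← hFG, hG, mul_zero]
  by_contra hG
  have hdeg : G.natDegree < n := by
    rw [← hn, ← hFG, natDegree_mul (X_sub_C_ne_zero _) hG, natDegree_X_sub_C]
    omega
  refine hG (ih _ hdeg (S := {kl | (kl.1, kl.2 + 1) ∈ S}) (θ := fun l => θ (l + 1))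
    (fun a b hba ha => hS (show (b.1, b.2 + 1) ≤ (a.1, a.2 + 1) from
      ⟨hba.1, Nat.succ_le_succ hba.2⟩) ha) (hθ.comp Nat.succ_injective)
    (fun k l hkl => coeff_coeff_divByMonic_X_sub_C_eq_zero hS hF _ hkl) (fun k l hkl => ?_) rfl)
  have hF0 := hvan k (l + 1) hkl
  rw [← hFG, evalEval_mul, evalEval_sub, evalEval_X, evalEval_CC] at hF0
  exact (mul_eq_zero.1 hF0).resolve_left (sub_ne_zero.2 (hθ.ne (Nat.succ_ne_zero l)))

end Unisolvence

section NodeProd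

variable {K : Type*} [Field K] (x : ℕ → K) (p : ℕ) (s : Finset ℕ)

def nodeProd (z : K) : K :=
  ∏ i ∈ s, (z - x i) / (x p - x i)

variable {x p s}

lemma nodeProd_self (hx : Function.Injective x) (hp : p ∉ s) : nodeProd x p s (x p) = 1 :=
  prod_eq_one fun _ hi => div_self <| sub_ne_zero.2 fun h => hp (hx h ▸ hi)

lemma nodeProd_of_mem {k : ℕ} (hk : k ∈ s) : nodeProd x p s (x k) = 0 :=
  prod_eq_zero hk (by simp)

variable (x p s)

lemma exists_natDegree_le_eval_eq_nodeProd :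
    ∃ A : K[X], A.natDegree ≤ #s ∧ ∀ z, A.eval z = nodeProd x p s z := by
  refine ⟨∏ i ∈ s, C (x p - x i)⁻¹ * (X - C (x i)), ?_, fun z => ?_⟩
  · refine (natDegree_prod_le _ _).trans ?_
    simpa using sum_le_card_nsmul s _ 1 fun i _ =>
      (natDegree_C_mul_le _ _).trans (natDegree_X_sub_C (x i)).le
  · simp [nodeProd, eval_prod, div_eq_inv_mul]

end NodeProd

lemma isLowerSet_bidIdx (d m : ℕ) : IsLowerSet {kl | BidIdx d m kl} := by
  rintro ⟨k, l⟩ ⟨k', l'⟩ ⟨hk, hl⟩ h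
  simp only [Set.mem_ofPred_eq, BidIdx] at *
  omega

lemma exists_bivariate_of_mem_polySpace {d m : ℕ} {f : ℂ × ℂ → ℂ} (hf : f ∈ PolySpace d m) :
    ∃ F : ℂ[X][Y], (∀ k l, ¬BidIdx d m (k, l) → (F.coeff l).coeff k = 0) ∧
      ∀ z w, f (z, w) = F.evalEval z w := by
  induction hf using Submodule.span_induction with
  | mem g hg =>
    obtain ⟨k, l, hkl, rfl⟩ := hg
    refine ⟨monomial l (monomial k 1), fun k' l' h => ?_, fun z w => by simp [evalEval]⟩
    rw [coeff_monomial]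
    split_ifs with hl
    · rw [coeff_monomial, if_neg]
      rintro rfl
      exact h (hl ▸ hkl)
    · exact coeff_zero k'
  | zero => exact ⟨0, by simp, by simp⟩
  | add g g' _ _ hg hg' =>
    obtain ⟨F, hF, hFg⟩ := hg
    obtain ⟨F', hF', hFg'⟩ := hg'
    exact ⟨F + F', fun k l h => by simp [hF k l h, hF' k l h], fun z w => by simp [hFg, hFg']⟩
  | smul c g _ hg =>
    obtain ⟨F, hF, hFg⟩ := hg
    exact ⟨c • F, fun k l h => by simp [hF k l h], fun z w => by simp [hFg]⟩

theorem eq_zero_of_mem_polySpace {η θ : ℕ → ℂ} (hη : Function.Injective η)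
    (hθ : Function.Injective θ) {d m : ℕ} {f : ℂ × ℂ → ℂ} (hf : f ∈ PolySpace d m)
    (hvan : ∀ k l, BidIdx d m (k, l) → f (η k, θ l) = 0) : f = 0 := by
  obtain ⟨F, hF, hfF⟩ := exists_bivariate_of_mem_polySpace hf
  have hF0 : F = 0 := eq_zero_of_evalEval_eq_zero_of_isLowerSet (isLowerSet_bidIdx d m) hη hθ
    hF fun k l hkl => hfF _ _ ▸ hvan k l hkl
  funext ⟨z, w⟩
  rw [hfF, hF0, evalEval_zero, Pi.zero_apply]

theorem IsFLIP.unique {η θ : ℕ → ℂ} (hη : Function.Injective η) (hθ : Function.Injective θ)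
    {d m p q : ℕ} {L L' : ℂ × ℂ → ℂ} (hL : IsFLIP η θ d m p q L)
    (hL' : IsFLIP η θ d m p q L') : L = L' := by
  refine sub_eq_zero.1 <| eq_zero_of_mem_polySpace hη hθ (sub_mem hL.1 hL'.1) fun k l hkl => ?_
  by_cases hpq : (k, l) = (p, q)
  · obtain ⟨rfl, rfl⟩ := Prod.mk.inj hpq
    simp [hL.2.1, hL'.2.1]
  · simp [hL.2.2 k l hkl hpq, hL'.2.2 k l hkl hpq]

lemma mul_eval_mem_polySpace {d m : ℕ} {A B : ℂ[X]}
    (h : BidIdx d m (A.natDegree, B.natDegree)) :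
    (fun zw : ℂ × ℂ => A.eval zw.1 * B.eval zw.2) ∈ PolySpace d m := by
  have hsum : (fun zw : ℂ × ℂ => A.eval zw.1 * B.eval zw.2) =
      ∑ k ∈ range (A.natDegree + 1), ∑ l ∈ range (B.natDegree + 1),
        (A.coeff k * B.coeff l) • fun zw : ℂ × ℂ => zw.1 ^ k * zw.2 ^ l := by
    funext zw
    simp only [Finset.sum_apply, Pi.smul_apply, smul_eq_mul, eval_eq_sum_range, sum_mul_sum]
    exact sum_congr rfl fun k _ => sum_congr rfl fun l _ => by ring
  rw [hsum]
  refine sum_mem fun k hk => sum_mem fun l hl => Submodule.smul_mem _ _ <|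
    Submodule.subset_span ⟨k, l, isLowerSet_bidIdx d m ?_ h, rfl⟩
  exact ⟨Nat.le_of_lt_succ (mem_range.1 hk), Nat.le_of_lt_succ (mem_range.1 hl)⟩

lemma nodeProd_mul_nodeProd_mem_polySpace {d m : ℕ} (η θ : ℕ → ℂ) (p q : ℕ) {s t : Finset ℕ}
    (h : BidIdx d m (#s, #t)) :
    (fun zw : ℂ × ℂ => nodeProd η p s zw.1 * nodeProd θ q t zw.2) ∈ PolySpace d m := by
  obtain ⟨A, hA, hAeval⟩ := exists_natDegree_le_eval_eq_nodeProd η p s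
  obtain ⟨B, hB, hBeval⟩ := exists_natDegree_le_eval_eq_nodeProd θ q t
  simpa only [hAeval, hBeval] using
    mul_eval_mem_polySpace (isLowerSet_bidIdx d m (show (_, _) ≤ (_, _) from ⟨hA, hB⟩) h)

noncomputable def nodeProd₂ (η θ : ℕ → ℂ) (p q : ℕ) (s t : Finset ℕ) (zw : ℂ × ℂ) : ℂ :=
  nodeProd η p s zw.1 * nodeProd θ q t zw.2

noncomputable def threeTermFLIP (η θ : ℕ → ℂ) (p q : ℕ) : ℂ × ℂ → ℂ :=
  nodeProd₂ η θ p q ((range (p + 2)).erase p) (range q)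
    - nodeProd₂ η θ p q (range p) (range q)
    + nodeProd₂ η θ p q (range p) ((range (q + 2)).erase q)

theorem isFLIP_threeTermFLIP {η θ : ℕ → ℂ} (hη : Function.Injective η)
    (hθ : Function.Injective θ) {d m p q : ℕ} (hpq : p + q + 1 = d) (hp : p < m) :
    IsFLIP η θ d m p q (threeTermFLIP η θ p q) := by
  have mem (s t : Finset ℕ) (h : BidIdx d m (#s, #t)) : nodeProd₂ η θ p q s t ∈ PolySpace d m :=
    nodeProd_mul_nodeProd_mem_polySpace η θ p q h
  have hcard (n : ℕ) : #((range (n + 2)).erase n) = n + 1 := by simp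
  refine ⟨add_mem (sub_mem (mem _ _ ?_) (mem _ _ ?_)) (mem _ _ ?_), ?_, fun k l hkl hne => ?_⟩
  · simp only [BidIdx, hcard, card_range]; omega
  · simp only [BidIdx, card_range]; omega
  · simp only [BidIdx, hcard, card_range]; omega
  · simp [threeTermFLIP, nodeProd₂, nodeProd_self hη, nodeProd_self hθ]
  simp only [threeTermFLIP, nodeProd₂, Pi.add_apply, Pi.sub_apply]
  rcases Nat.lt_or_ge l q with hlq | hlq
  · have hl : l ∈ (range (q + 2)).erase q := mem_erase.2 ⟨by omega, mem_range.2 (by omega)⟩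
    simp [nodeProd_of_mem (mem_range.2 hlq), nodeProd_of_mem hl]
  rcases Nat.lt_or_ge k p with hkp | hkp
  · have hk : k ∈ (range (p + 2)).erase p := mem_erase.2 ⟨by omega, mem_range.2 (by omega)⟩
    simp [nodeProd_of_mem (mem_range.2 hkp), nodeProd_of_mem hk]
  obtain ⟨rfl, rfl⟩ | ⟨rfl, rfl⟩ : (k = p + 1 ∧ l = q) ∨ (k = p ∧ l = q + 1) := by
    have : (k, l) ≠ (p, q) := hne
    simp only [BidIdx, ne_eq, Prod.mk.injEq] at hkl this
    omega
  · simp [nodeProd_of_mem (show p + 1 ∈ (range (p + 2)).erase p by simp), nodeProd_self hθ]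
  · simp [nodeProd_of_mem (show q + 1 ∈ (range (q + 2)).erase q by simp), nodeProd_self hη]

theorem statement12_general (η θ : ℕ → ℂ)
    (hη : Function.Injective η) (hθ : Function.Injective θ)
    (d m : ℕ)
    (p q : ℕ) (hpq : p + q + 1 = d) (hp : p < m) :
    ∀ L : (ℂ × ℂ) → ℂ, IsFLIP η θ d m p q L →
      ∀ z w : ℂ,
        L (z, w) =
          (∏ i ∈ (range (p + 2)).erase p, (z - η i) / (η p - η i)) *
              (∏ j ∈ range q, (w - θ j) / (θ q - θ j))
            - (∏ i ∈ range p, (z - η i) / (η p - η i)) *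
                (∏ j ∈ range q, (w - θ j) / (θ q - θ j))
            + (∏ i ∈ range p, (z - η i) / (η p - η i)) *
                (∏ j ∈ (range (q + 2)).erase q, (w - θ j) / (θ q - θ j)) := by
  intro L hL z w
  exact congrFun (hL.unique hη hθ (isFLIP_threeTermFLIP hη hθ hpq hp)) (z, w)

/-- in the bidimensional intertwining setting, for a point
`(η_p, θ_q) ∈ Ω_N` with `p+q = d−1` and `0 ≤ p ≤ m−1`, the FLIP is given by the
three-term formula (all products normalized by `(η_p − η_i)`, `(θ_q − θ_j)`). -/
theorem statement12 (η θ : ℕ → ℂ)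
    (hη : Function.Injective η) (hθ : Function.Injective θ)
    (N d m : ℕ) (hN : 1 ≤ N)
    (hlow : d * (d + 1) / 2 < N) (hhigh : N ≤ (d + 1) * (d + 2) / 2)
    (hm : N = d * (d + 1) / 2 + 1 + m)
    (p q : ℕ) (hpq : p + q + 1 = d) (hp : p < m) :
    ∀ L : (ℂ × ℂ) → ℂ, IsFLIP η θ d m p q L →
      ∀ z w : ℂ,
        L (z, w) =
          (∏ i ∈ (range (p + 2)).erase p, (z - η i) / (η p - η i)) *
              (∏ j ∈ range q, (w - θ j) / (θ q - θ j))
            - (∏ i ∈ range p, (z - η i) / (η p - η i)) *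
                (∏ j ∈ range q, (w - θ j) / (θ q - θ j))
            + (∏ i ∈ range p, (z - η i) / (η p - η i)) *
                (∏ j ∈ (range (q + 2)).erase q, (w - θ j) / (θ q - θ j)) :=
  statement12_general η θ hη hθ d m p q hpq hp
end
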